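/- Let X be a locally finite poset of finite length l(X) and K a field. Then the incidence algebra I(X,K) is strongly Lie solvable; more precisely A^(n) = {0} whenever 2^{n-1} ≥ l(X) + 1, where A^(0) = A = I(X,K) and A^(n+1) = [A^(n), A^(n)]·A. -/

import Mathlib

open IncidenceAlgebra

variable {K : Type*} [Field K] {X : Type*} [PartialOrder X] [LocallyFiniteOrder X] [DecidableEq X]

/-- The length `l(x,y)` of the interval `[x,y]`: the supremum of `|C| - 1` over finite chains
`C ⊆ [x,y]`. -/
noncomputable def intervalLength (x y : X) : ℕ∞ := (Set.Icc x y).chainHeight (· < ·) - 1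

/-- `Z_k`: the set of elements `α` of the incidence algebra with `α x y = 0` whenever
`l(x,y) ≤ k - 1`. -/
def zSet (K : Type*) [Field K] (X : Type*) [PartialOrder X] [LocallyFiniteOrder X]
    [DecidableEq X] (k : ℕ) : Set (IncidenceAlgebra K X) :=
  {f | ∀ x y : X, x ≤ y → intervalLength x y ≤ (k : ℕ∞) - 1 → f x y = 0}


/-- The span of Lie brackets `[u,v] = u*v - v*u`, `u ∈ U`, `v ∈ V`. -/
def lieBracketSpan (U V : Submodule K (IncidenceAlgebra K X)) :
    Submodule K (IncidenceAlgebra K X) :=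
  Submodule.span K {z | ∃ u ∈ U, ∃ v ∈ V, z = u * v - v * u}

/-- The span of products `u * a`, `u ∈ U`, `a` arbitrary. -/
def mulASpan (U : Submodule K (IncidenceAlgebra K X)) : Submodule K (IncidenceAlgebra K X) :=
  Submodule.span K {z | ∃ u ∈ U, ∃ a : IncidenceAlgebra K X, z = u * a}

/-- `J = Z_1`, the ideal of elements vanishing on the diagonal. -/
def jRad (K : Type*) [Field K] (X : Type*) [PartialOrder X] [LocallyFiniteOrder X]
    [DecidableEq X] : Submodule K (IncidenceAlgebra K X) where
  carrier := {f | ∀ x : X, f x x = 0}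
  add_mem' := fun hf hg x => by simp [IncidenceAlgebra.add_apply, hf x, hg x]
  zero_mem' := fun _ => rfl
  smul_mem' := fun c f hf x => by simp [IncidenceAlgebra.constSMul_apply, hf x]

/-- The lower central series `γ₁ = I`, `γ_{n+1} = [γ_n, I]` (indexed from `0`, so that
`lowerCentralSeriesSub I n` is `γ_{n+1}`). -/
def lowerCentralSeriesSub (I : Submodule K (IncidenceAlgebra K X)) :
    ℕ → Submodule K (IncidenceAlgebra K X)
  | 0 => I
  | n + 1 => lieBracketSpan (lowerCentralSeriesSub I n) I

/-- The strong Lie derived series `I⁽⁰⁾ = I`, `I⁽ⁿ⁺¹⁾ = [I⁽ⁿ⁾, I⁽ⁿ⁾]·A`. -/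
def strongDerivedSeriesSub (I : Submodule K (IncidenceAlgebra K X)) :
    ℕ → Submodule K (IncidenceAlgebra K X)
  | 0 => I
  | n + 1 =>
      mulASpan (lieBracketSpan (strongDerivedSeriesSub I n) (strongDerivedSeriesSub I n))

/-! ### Auxiliary lemmas -/

lemma chainHeight_union_eq_lt {α : Type*} [Preorder α] (s t : Set α)
    (H : ∀ a ∈ s, ∀ b ∈ t, a < b) :
    (s ∪ t).chainHeight (· < ·) = s.chainHeight (· < ·) + t.chainHeight (· < ·) := by
  apply le_antisymm
  · rw [Set.chainHeight_eq_iSup]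
    refine iSup_le fun c => ?_
    obtain ⟨c, hcs, hc⟩ := c
    calc c.encard = ((c ∩ s) ∪ (c ∩ t)).encard := by
          rw [← Set.inter_union_distrib_left, Set.inter_eq_left.2 hcs]
      _ ≤ (c ∩ s).encard + (c ∩ t).encard := Set.encard_union_le _ _
      _ ≤ _ := add_le_add
          (Set.encard_le_chainHeight_of_isChain _ _ Set.inter_subset_right
            (hc.mono Set.inter_subset_left))
          (Set.encard_le_chainHeight_of_isChain _ _ Set.inter_subset_right
            (hc.mono Set.inter_subset_left))
  · rw [Set.chainHeight_eq_iSup s, Set.chainHeight_eq_iSup t]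
    haveI : Nonempty {c : Set α // c ⊆ s ∧ IsChain (· < ·) c} := ⟨⟨∅, by simp⟩⟩
    haveI : Nonempty {c : Set α // c ⊆ t ∧ IsChain (· < ·) c} := ⟨⟨∅, by simp⟩⟩
    refine ENat.iSup_add_iSup_le fun c d => ?_
    obtain ⟨c, hcs, hc⟩ := c
    obtain ⟨d, hdt, hd⟩ := d
    have hdisj : Disjoint c d :=
      Set.disjoint_left.2 fun a hac had => lt_irrefl a (H a (hcs hac) a (hdt had))
    rw [← Set.encard_union_eq hdisj]
    refine Set.encard_le_chainHeight_of_isChain _ _ (Set.union_subset_union hcs hdt) ?_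
    intro a ha b hb hab
    rcases ha with ha | ha <;> rcases hb with hb | hb
    · exact hc ha hb hab
    · exact Or.inl (H a (hcs ha) b (hdt hb))
    · exact Or.inr (H b (hcs hb) a (hdt ha))
    · exact hd ha hb hab

lemma chainHeight_insert_of_forall_gt_lt {α : Type*} [Preorder α] {s : Set α} (a : α)
    (hx : ∀ b ∈ s, a < b) :
    (insert a s).chainHeight (· < ·) = s.chainHeight (· < ·) + 1 := by
  rw [Set.insert_eq, chainHeight_union_eq_lt _ _
      (fun b hb c hc => (Set.mem_singleton_iff.1 hb) ▸ hx c hc),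
    ← Set.encard_eq_chainHeight_of_isChain _ (Set.subsingleton_singleton.isChain),
    Set.encard_singleton, add_comm]

/-- `Z_k` as a submodule. -/
def zSub (k : ℕ) : Submodule K (IncidenceAlgebra K X) where
  carrier := zSet K X k
  add_mem' := fun hf hg x y hxy hl => by
    simp [IncidenceAlgebra.add_apply, hf x y hxy hl, hg x y hxy hl]
  zero_mem' := fun _ _ _ _ => rfl
  smul_mem' := fun c f hf x y hxy hl => by
    simp [IncidenceAlgebra.constSMul_apply, hf x y hxy hl]

lemma one_le_chainHeight_Icc {x y : X} (hxy : x ≤ y) : 1 ≤ (Set.Icc x y).chainHeight (· < ·) :=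
  (Set.one_le_chainHeight_iff _ _).2 ⟨x, Set.mem_Icc.2 ⟨le_refl x, hxy⟩⟩

lemma mem_zSub_iff {k : ℕ} (hk : 1 ≤ k) {f : IncidenceAlgebra K X} :
    f ∈ zSub (K := K) (X := X) k ↔
      ∀ x y : X, x ≤ y → (Set.Icc x y).chainHeight (· < ·) ≤ (k : ℕ∞) → f x y = 0 := by
  constructor
  · intro hf x y hxy hL
    exact hf x y hxy (by
      show (Set.Icc x y).chainHeight (· < ·) - 1 ≤ (k : ℕ∞) - 1
      exact tsub_le_tsub_right hL 1)
  · intro hf x y hxy hL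
    apply hf x y hxy
    have h1 : (1 : ℕ∞) ≤ (Set.Icc x y).chainHeight (· < ·) := one_le_chainHeight_Icc hxy
    have hk' : (1 : ℕ∞) ≤ (k : ℕ∞) := by exact_mod_cast hk
    calc (Set.Icc x y).chainHeight (· < ·) = (Set.Icc x y).chainHeight (· < ·) - 1 + 1 :=
          (tsub_add_cancel_of_le h1).symm
      _ ≤ (k : ℕ∞) - 1 + 1 := add_le_add_left (by exact hL) 1
      _ = (k : ℕ∞) := tsub_add_cancel_of_le hk'

/-- Subadditivity of chain height of intervals. -/
lemma chainHeight_Icc_add_le {x z y : X} (hxz : x ≤ z) (hzy : z ≤ y) :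
    (Set.Icc x z).chainHeight (· < ·) + (Set.Icc z y).chainHeight (· < ·) ≤ (Set.Icc x y).chainHeight (· < ·) + 1 := by
  have h1 : (Set.Icc z y).chainHeight (· < ·) = (Set.Ioc z y).chainHeight (· < ·) + 1 := by
    rw [← Set.Ioc_insert_left hzy]
    exact chainHeight_insert_of_forall_gt_lt z fun b hb => hb.1
  have h2 : (Set.Icc x z ∪ Set.Ioc z y).chainHeight (· < ·)
      = (Set.Icc x z).chainHeight (· < ·) + (Set.Ioc z y).chainHeight (· < ·) :=
    chainHeight_union_eq_lt _ _ fun a ha b hb => lt_of_le_of_lt ha.2 hb.1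
  have h3 : (Set.Icc x z ∪ Set.Ioc z y).chainHeight (· < ·) ≤ (Set.Icc x y).chainHeight (· < ·) :=
    Set.chainHeight_mono _ _ _ (Set.union_subset
      (Set.Icc_subset_Icc_right hzy) (Set.Ioc_subset_Icc_self.trans (Set.Icc_subset_Icc_left hxz)))
  calc (Set.Icc x z).chainHeight (· < ·) + (Set.Icc z y).chainHeight (· < ·)
      = (Set.Icc x z).chainHeight (· < ·) + (Set.Ioc z y).chainHeight (· < ·) + 1 := by rw [h1, add_assoc]
    _ ≤ (Set.Icc x y).chainHeight (· < ·) + 1 := add_le_add_left (h2 ▸ h3) 1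

lemma mul_mem_zSub {j k : ℕ} (hj : 1 ≤ j) (hk : 1 ≤ k) {f g : IncidenceAlgebra K X}
    (hf : f ∈ zSub (K := K) (X := X) j) (hg : g ∈ zSub (K := K) (X := X) k) :
    f * g ∈ zSub (K := K) (X := X) (j + k) := by
  rw [mem_zSub_iff hj] at hf
  rw [mem_zSub_iff hk] at hg
  rw [mem_zSub_iff (le_trans hj (Nat.le_add_right j k))]
  intro x y hxy hL
  rw [IncidenceAlgebra.mul_apply]
  apply Finset.sum_eq_zero
  intro z hz
  rw [Finset.mem_Icc] at hz
  obtain ⟨hxz, hzy⟩ := hz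
  by_cases hc : (Set.Icc x z).chainHeight (· < ·) ≤ (j : ℕ∞)
  · rw [hf x z hxz hc, zero_mul]
  · have hjz : (j : ℕ∞) + 1 ≤ (Set.Icc x z).chainHeight (· < ·) := Order.add_one_le_of_lt (not_le.1 hc)
    have key : (j : ℕ∞) + 1 + (Set.Icc z y).chainHeight (· < ·) ≤ (j : ℕ∞) + 1 + (k : ℕ∞) := by
      calc (j : ℕ∞) + 1 + (Set.Icc z y).chainHeight (· < ·)
          ≤ (Set.Icc x z).chainHeight (· < ·) + (Set.Icc z y).chainHeight (· < ·) := add_le_add_left hjz _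
        _ ≤ (Set.Icc x y).chainHeight (· < ·) + 1 := chainHeight_Icc_add_le hxz hzy
        _ ≤ ((j + k : ℕ) : ℕ∞) + 1 := add_le_add_left hL 1
        _ = (j : ℕ∞) + 1 + (k : ℕ∞) := by push_cast; ring
    have hzy' : (Set.Icc z y).chainHeight (· < ·) ≤ (k : ℕ∞) :=
      (WithTop.add_le_add_iff_left (WithTop.add_ne_top.2 ⟨WithTop.coe_ne_top, WithTop.one_ne_top⟩)).1 key
    rw [hg z y hzy hzy', mul_zero]

lemma mul_right_mem_zSub {j : ℕ} (hj : 1 ≤ j) {f : IncidenceAlgebra K X}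
    (hf : f ∈ zSub (K := K) (X := X) j) (a : IncidenceAlgebra K X) :
    f * a ∈ zSub (K := K) (X := X) j := by
  rw [mem_zSub_iff hj] at hf ⊢
  intro x y hxy hL
  rw [IncidenceAlgebra.mul_apply]
  apply Finset.sum_eq_zero
  intro z hz
  rw [Finset.mem_Icc] at hz
  have hxz : (Set.Icc x z).chainHeight (· < ·) ≤ (j : ℕ∞) :=
    le_trans (Set.chainHeight_mono _ _ _ (Set.Icc_subset_Icc_right hz.2)) hL
  rw [hf x z hz.1 hxz, zero_mul]

lemma commutator_mem_zSub_one (u v : IncidenceAlgebra K X) :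
    u * v - v * u ∈ zSub (K := K) (X := X) 1 := by
  rw [mem_zSub_iff le_rfl]
  intro x y hxy hL
  have hxy' : x = y := by
    by_contra hne
    have hlt : x < y := lt_of_le_of_ne hxy hne
    have h2 : (2 : ℕ∞) ≤ (Set.Icc x y).chainHeight (· < ·) := by
      have hsub : ({x, y} : Set X) ⊆ Set.Icc x y := by
        intro i hi
        rcases hi with rfl | rfl
        · exact Set.mem_Icc.2 ⟨le_refl _, hxy⟩
        · exact Set.mem_Icc.2 ⟨hxy, le_refl _⟩
      have hch : IsChain (· < ·) ({x, y} : Set X) := by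
        intro a ha b hb hab
        rcases ha with rfl | rfl <;> rcases hb with rfl | rfl
        · exact absurd rfl hab
        · exact Or.inl hlt
        · exact Or.inr hlt
        · exact absurd rfl hab
      have := Set.encard_le_chainHeight_of_isChain _ _ hsub hch
      rwa [Set.encard_pair hne] at this
    have : (2 : ℕ∞) ≤ 1 := le_trans h2 (by exact_mod_cast hL)
    simp at this
  subst hxy'
  rw [IncidenceAlgebra.sub_apply, IncidenceAlgebra.mul_apply, IncidenceAlgebra.mul_apply,
    Finset.Icc_self, Finset.sum_singleton, Finset.sum_singleton, mul_comm, sub_self]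

lemma lieBracketSpan_le_zSub {j k : ℕ} (hj : 1 ≤ j) (hk : 1 ≤ k)
    {U V : Submodule K (IncidenceAlgebra K X)}
    (hU : U ≤ zSub (K := K) (X := X) j) (hV : V ≤ zSub (K := K) (X := X) k) :
    lieBracketSpan U V ≤ zSub (K := K) (X := X) (j + k) := by
  rw [lieBracketSpan, Submodule.span_le]
  rintro z ⟨u, hu, v, hv, rfl⟩
  have h1 := mul_mem_zSub hj hk (hU hu) (hV hv)
  have h2 := mul_mem_zSub hk hj (hV hv) (hU hu)
  rw [Nat.add_comm k j] at h2
  exact sub_mem h1 h2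

lemma mulASpan_le_zSub {j : ℕ} (hj : 1 ≤ j) {U : Submodule K (IncidenceAlgebra K X)}
    (hU : U ≤ zSub (K := K) (X := X) j) :
    mulASpan U ≤ zSub (K := K) (X := X) j := by
  rw [mulASpan, Submodule.span_le]
  rintro z ⟨u, hu, a, rfl⟩
  exact mul_right_mem_zSub hj (hU hu) a

lemma strongDerivedSeriesSub_le_zSub :
    ∀ n : ℕ, 1 ≤ n →
      strongDerivedSeriesSub (⊤ : Submodule K (IncidenceAlgebra K X)) n
        ≤ zSub (K := K) (X := X) (2 ^ (n - 1)) := by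
  intro n hn
  induction n, hn using Nat.le_induction with
  | base =>
    show strongDerivedSeriesSub ⊤ 1 ≤ zSub 1
    have hlie : lieBracketSpan (⊤ : Submodule K (IncidenceAlgebra K X)) ⊤
        ≤ zSub (K := K) (X := X) 1 := by
      rw [lieBracketSpan, Submodule.span_le]
      rintro z ⟨u, -, v, -, rfl⟩
      exact commutator_mem_zSub_one u v
    exact mulASpan_le_zSub le_rfl hlie
  | succ n hn ih =>
    have hpow : 1 ≤ 2 ^ (n - 1) := Nat.one_le_two_pow
    have hsum : 2 ^ (n - 1) + 2 ^ (n - 1) = 2 ^ n := by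
      rw [← two_mul, ← pow_succ', Nat.sub_add_cancel hn]
    show mulASpan (lieBracketSpan _ _) ≤ zSub (2 ^ (n + 1 - 1))
    have hlie := lieBracketSpan_le_zSub hpow hpow ih ih
    rw [hsum] at hlie
    have : 1 ≤ 2 ^ n := Nat.one_le_two_pow
    simpa using mulASpan_le_zSub this hlie

/-- if `X` has finite length then `I(X,K)` is strongly Lie solvable; more precisely
`A⁽ⁿ⁾ = 0` whenever `2^{n-1} ≥ l(X) + 1`. -/
theorem strongDerivedSeries_top_eq_bot
    (hX : (Set.univ : Set X).chainHeight (· < ·) ≠ ⊤) (n : ℕ) (hn : 0 < n)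
    (h : (Set.univ : Set X).chainHeight (· < ·) - 1 + 1 ≤ ((2 ^ (n - 1) : ℕ) : ℕ∞)) :
    strongDerivedSeriesSub (⊤ : Submodule K (IncidenceAlgebra K X)) n = ⊥ := by
  have huniv : (Set.univ : Set X).chainHeight (· < ·) ≤ ((2 ^ (n - 1) : ℕ) : ℕ∞) :=
    le_trans le_tsub_add h
  rw [eq_bot_iff]
  refine le_trans (strongDerivedSeriesSub_le_zSub n hn) ?_
  intro f hf
  rw [mem_zSub_iff Nat.one_le_two_pow] at hf
  rw [Submodule.mem_bot]
  apply IncidenceAlgebra.ext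
  intro a b hab
  rw [IncidenceAlgebra.zero_apply]
  exact hf a b hab (le_trans (Set.chainHeight_mono _ _ _ (Set.subset_univ _)) huniv)
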